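/- arXiv:math/0401350 — 5 statements merged into one kernel-verified Lean document; each statement's English description precedes it below -/
import Mathlib

section
/- Let G be a group of automorphisms of a t-(v,k,1) design D with t ≥ 2, acting transitively on the blocks of D. Then G acts transitively on the points of D. (Block's theorem for Steiner designs.) -/
/-!
Counting flags shows that a Steiner `t`-design with `t ≥ 2` is a `2`-design: every point lies on
`r` blocks and every pair of points on `λ` blocks, with `b k = v r` and `r (k - 1) = λ (v - 1)`.
If `x` and `y` lay in different `G`-orbits `O₁` and `O₂`, block-transitivity would make the sizes
`c₁`, `c₂` of the intersections of a block with `O₁`, `O₂` independent of the block, and double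
counting incidences would give `|O₁| r = b c₁`, `|O₂| r = b c₂` and `|O₁| |O₂| λ = b c₁ c₂`,
hence `r² = b λ`. With the two identities above this forces `k (v - 1) = v (k - 1)`, i.e. `k = v`.
-/

open Finset

/-- A `t`-`(v,k,λ)` design on the point set `X`. -/
def IsDesignOn {V : Type*} [DecidableEq V] (X : Finset V) (t v k lam : ℕ)
    (B : Finset (Finset V)) : Prop :=
  X.card = v ∧ (∀ b ∈ B, b ⊆ X ∧ b.card = k) ∧
    ∀ s ⊆ X, s.card = t → (B.filter (fun b => s ⊆ b)).card = lam

theorem Finset.sum_card_inter_mul_card_inter {α : Type*} [DecidableEq α]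
    (B : Finset (Finset α)) (s t : Finset α) :
    ∑ b ∈ B, #(s ∩ b) * #(t ∩ b) = ∑ x ∈ s, ∑ y ∈ t, #{b ∈ B | x ∈ b ∧ y ∈ b} := by
  simp only [← filter_mem_eq_inter, card_filter, sum_mul_sum, ite_zero_mul_ite_zero, mul_one]
  rw [sum_comm]
  exact sum_congr rfl fun _ _ => sum_comm

namespace IsDesignOn

variable {V : Type*} [DecidableEq V] {X : Finset V} {B : Finset (Finset V)} {t v k lam : ℕ}

theorem card_filter_superset_mul_choose (hD : IsDesignOn X t v k lam B) {S : Finset V}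
    (hSX : S ⊆ X) (hSt : #S ≤ t) :
    #{b ∈ B | S ⊆ b} * (k - #S).choose (t - #S) = lam * (v - #S).choose (t - #S) := by
  obtain ⟨hXv, hB, hdesign⟩ := hD
  set A := {T ∈ X.powersetCard t | S ⊆ T}
  calc #{b ∈ B | S ⊆ b} * (k - #S).choose (t - #S)
      = ∑ b ∈ B, #{T ∈ A | T ⊆ b} := by
        rw [← smul_eq_mul, ← sum_const, sum_filter]
        refine sum_congr rfl fun b hb => ?_
        have hAb : {T ∈ A | T ⊆ b} = {T ∈ b.powersetCard t | S ⊆ T} := by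
          ext T
          simp only [A, mem_filter, mem_powersetCard]
          constructor
          · rintro ⟨⟨⟨-, hTt⟩, hST⟩, hTb⟩
            exact ⟨⟨hTb, hTt⟩, hST⟩
          · rintro ⟨⟨hTb, hTt⟩, hST⟩
            exact ⟨⟨⟨hTb.trans (hB b hb).1, hTt⟩, hST⟩, hTb⟩
        split_ifs with hSb
        · rw [hAb, card_filter_powersetCard_subset S b t hSb hSt, (hB b hb).2]
        · rw [hAb, eq_comm, card_eq_zero, filter_eq_empty_iff]
          exact fun T hT hST => hSb (hST.trans (mem_powersetCard.1 hT).1)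
    _ = ∑ T ∈ A, #{b ∈ B | T ⊆ b} := by
        exact (sum_card_bipartiteAbove_eq_sum_card_bipartiteBelow (s := A) (t := B)
          (r := (· ⊆ ·))).symm
    _ = #A * lam := by
        rw [← smul_eq_mul, ← sum_const]
        refine sum_congr rfl fun T hT => ?_
        obtain ⟨hTX, hTt⟩ := mem_powersetCard.1 (mem_filter.1 hT).1
        exact hdesign T hTX hTt
    _ = lam * (v - #S).choose (t - #S) := by
        rw [card_filter_powersetCard_subset S X t hSX hSt, hXv, mul_comm]

theorem card_filter_superset_pos (hD : IsDesignOn X t v k lam B) (hlam : 0 < lam) (htv : t ≤ v)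
    {S : Finset V} (hSX : S ⊆ X) (hSt : #S ≤ t) : 0 < #{b ∈ B | S ⊆ b} := by
  have h := hD.card_filter_superset_mul_choose hSX hSt
  have hpos : 0 < lam * (v - #S).choose (t - #S) := Nat.mul_pos hlam (Nat.choose_pos (by omega))
  exact Nat.pos_of_mul_pos_right (h ▸ hpos)

theorem card_filter_superset_mul_sub_eq (hD : IsDesignOn X t v k lam B) (htk : t ≤ k)
    {S : Finset V} {x : V} (hSX : S ⊆ X) (hSt : #S < t) (hx : x ∈ X) (hxS : x ∉ S) :
    #{b ∈ B | S ⊆ b} * (k - #S) = #{b ∈ B | insert x S ⊆ b} * (v - #S) := by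
  have hxSX : insert x S ⊆ X := insert_subset hx hSX
  have hSv : #S < v := by
    have := card_le_card hxSX
    rw [card_insert_of_notMem hxS] at this
    rw [← hD.1]
    omega
  have h₀ := hD.card_filter_superset_mul_choose hSX hSt.le
  have h₁ := hD.card_filter_superset_mul_choose hxSX (by rw [card_insert_of_notMem hxS]; omega)
  rw [card_insert_of_notMem hxS] at h₁
  obtain ⟨n, hn, hn'⟩ : ∃ n, k - #S = n + 1 ∧ k - (#S + 1) = n :=
    ⟨k - #S - 1, by omega, by omega⟩
  obtain ⟨m, hm, hm'⟩ : ∃ m, t - #S = m + 1 ∧ t - (#S + 1) = m :=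
    ⟨t - #S - 1, by omega, by omega⟩
  obtain ⟨N, hN, hN'⟩ : ∃ N, v - #S = N + 1 ∧ v - (#S + 1) = N :=
    ⟨v - #S - 1, by omega, by omega⟩
  rw [hn, hm, hN] at h₀
  rw [hn', hm', hN'] at h₁
  rw [hn, hN]
  refine Nat.eq_of_mul_eq_mul_right (Nat.choose_pos (show m ≤ n by omega)) ?_
  calc #{b ∈ B | S ⊆ b} * (n + 1) * n.choose m
      = #{b ∈ B | S ⊆ b} * (n + 1).choose (m + 1) * (m + 1) := by
        rw [mul_assoc, Nat.add_one_mul_choose_eq, mul_assoc]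
    _ = lam * ((N + 1) * N.choose m) := by rw [h₀, Nat.add_one_mul_choose_eq, mul_assoc]
    _ = #{b ∈ B | insert x S ⊆ b} * (N + 1) * n.choose m := by
        rw [mul_right_comm, h₁]; ring

theorem card_mul_eq_card_filter_mem_mul (hD : IsDesignOn X t v k lam B) (htk : t ≤ k)
    (ht : 0 < t) {x : V} (hx : x ∈ X) : #B * k = #{b ∈ B | x ∈ b} * v := by
  simpa using hD.card_filter_superset_mul_sub_eq htk (empty_subset X) (by simpa) hx
    (notMem_empty x)

theorem card_filter_mem_mul_eq (hD : IsDesignOn X t v k lam B) (htk : t ≤ k)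
    (ht : 1 < t) {x y : V} (hx : x ∈ X) (hy : y ∈ X) (hxy : x ≠ y) :
    #{b ∈ B | x ∈ b} * (k - 1) = #{b ∈ B | x ∈ b ∧ y ∈ b} * (v - 1) := by
  have h := hD.card_filter_superset_mul_sub_eq htk (singleton_subset_iff.2 hx) (by simpa) hy
    (notMem_singleton.2 hxy.symm)
  simpa [insert_subset_iff, and_comm] using h

theorem card_filter_mem_eq (hD : IsDesignOn X t v k lam B) (htk : t ≤ k) (ht : 0 < t)
    {x z : V} (hx : x ∈ X) (hz : z ∈ X) : #{b ∈ B | z ∈ b} = #{b ∈ B | x ∈ b} := by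
  have hv : 0 < v := hD.1 ▸ card_pos.2 ⟨x, hx⟩
  exact Nat.eq_of_mul_eq_mul_right hv <| by
    rw [← hD.card_mul_eq_card_filter_mem_mul htk ht hz,
      ← hD.card_mul_eq_card_filter_mem_mul htk ht hx]

theorem card_filter_mem_and_mem_eq (hD : IsDesignOn X t v k lam B) (htk : t ≤ k) (ht : 1 < t)
    {x y z w : V} (hx : x ∈ X) (hy : y ∈ X) (hxy : x ≠ y) (hz : z ∈ X) (hw : w ∈ X)
    (hzw : z ≠ w) : #{b ∈ B | z ∈ b ∧ w ∈ b} = #{b ∈ B | x ∈ b ∧ y ∈ b} := by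
  have hv : 0 < v - 1 := by
    have := one_lt_card.2 ⟨x, hx, y, hy, hxy⟩
    rw [hD.1] at this
    omega
  exact Nat.eq_of_mul_eq_mul_right hv <| by
    rw [← hD.card_filter_mem_mul_eq htk ht hz hw hzw,
      ← hD.card_filter_mem_mul_eq htk ht hx hy hxy, hD.card_filter_mem_eq htk (by omega) hx hz]

end IsDesignOn

theorem Finset.card_inter_image_eq {α : Type*} [DecidableEq α] {g : Equiv.Perm α}
    {O : Finset α} (hO : ∀ z ∈ O, g z ∈ O) (b : Finset α) : #(O ∩ b.image g) = #(O ∩ b) := by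
  have hgO : O.image g = O :=
    eq_of_subset_of_card_le (image_subset_iff.2 hO) (card_image_of_injective _ g.injective).ge
  rw [← hgO, ← image_inter _ _ g.injective, card_image_of_injective _ g.injective, hgO]

theorem Finset.mul_self_eq_card_mul_of_card_inter_eq {α : Type*} [DecidableEq α]
    {B : Finset (Finset α)} {O₁ O₂ : Finset α} {r l : ℕ}
    (hO₁ : ∀ b ∈ B, ∀ b' ∈ B, #(O₁ ∩ b) = #(O₁ ∩ b'))
    (hO₂ : ∀ b ∈ B, ∀ b' ∈ B, #(O₂ ∩ b) = #(O₂ ∩ b'))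
    (hr₁ : ∀ z ∈ O₁, #{b ∈ B | z ∈ b} = r) (hr₂ : ∀ w ∈ O₂, #{b ∈ B | w ∈ b} = r)
    (hl : ∀ z ∈ O₁, ∀ w ∈ O₂, #{b ∈ B | z ∈ b ∧ w ∈ b} = l)
    (hne₁ : O₁.Nonempty) (hne₂ : O₂.Nonempty) : r * r = #B * l := by
  obtain rfl | ⟨b₀, hb₀⟩ := B.eq_empty_or_nonempty
  · obtain ⟨z, hz⟩ := hne₁
    simp [← hr₁ z hz]
  have e₁ : #B * #(O₁ ∩ b₀) = #O₁ * r := by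
    rw [← sum_card_inter hr₁, ← smul_eq_mul, ← sum_const]
    exact sum_congr rfl fun b hb => hO₁ b₀ hb₀ b hb
  have e₂ : #B * #(O₂ ∩ b₀) = #O₂ * r := by
    rw [← sum_card_inter hr₂, ← smul_eq_mul, ← sum_const]
    exact sum_congr rfl fun b hb => hO₂ b₀ hb₀ b hb
  have e₁₂ : #B * (#(O₁ ∩ b₀) * #(O₂ ∩ b₀)) = #O₁ * #O₂ * l :=
    calc #B * (#(O₁ ∩ b₀) * #(O₂ ∩ b₀)) = ∑ b ∈ B, #(O₁ ∩ b) * #(O₂ ∩ b) := by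
          rw [← smul_eq_mul, ← sum_const]
          exact sum_congr rfl fun b hb => by rw [hO₁ b₀ hb₀ b hb, hO₂ b₀ hb₀ b hb]
      _ = ∑ z ∈ O₁, ∑ w ∈ O₂, l := by
          rw [sum_card_inter_mul_card_inter]
          exact sum_congr rfl fun z hz => sum_congr rfl fun w hw => hl z hz w hw
      _ = #O₁ * #O₂ * l := by simp only [sum_const, smul_eq_mul, mul_assoc]
  refine Nat.eq_of_mul_eq_mul_left (Nat.mul_pos (card_pos.2 hne₁) (card_pos.2 hne₂)) ?_
  calc #O₁ * #O₂ * (r * r) = (#O₁ * r) * (#O₂ * r) := by ring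
    _ = #B * (#B * (#(O₁ ∩ b₀) * #(O₂ ∩ b₀))) := by rw [← e₁, ← e₂]; ring
    _ = #O₁ * #O₂ * (#B * l) := by rw [e₁₂]; ring

theorem Nat.eq_of_mul_self_eq_mul_of_mul_eq {r b l k v : ℕ} (hr : 0 < r) (hk : 0 < k) (hv : 0 < v)
    (hrbl : r * r = b * l) (hbk : b * k = r * v) (hrl : r * (k - 1) = l * (v - 1)) : k = v := by
  obtain ⟨k, rfl⟩ := Nat.exists_eq_add_one_of_ne_zero hk.ne'
  obtain ⟨v, rfl⟩ := Nat.exists_eq_add_one_of_ne_zero hv.ne'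
  simp only [Nat.add_sub_cancel] at hrl
  have : r * r * ((k + 1) * v) = r * r * ((v + 1) * k) := by
    calc r * r * ((k + 1) * v) = (b * (k + 1)) * (l * v) := by rw [hrbl]; ring
      _ = r * r * ((v + 1) * k) := by rw [hbk, ← hrl]; ring
  have := Nat.eq_of_mul_eq_mul_left (Nat.mul_pos hr hr) this
  nlinarith

section BlockTransitive

variable {V : Type*} {G : Subgroup (Equiv.Perm V)}

theorem card_inter_eq_of_block_transitive [DecidableEq V] {B : Finset (Finset V)}
    (hbt : ∀ b ∈ B, ∀ b' ∈ B, ∃ g ∈ G, b.image g = b') {O : Finset V}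
    (hO : ∀ g ∈ G, ∀ z ∈ O, g z ∈ O) : ∀ b ∈ B, ∀ b' ∈ B, #(O ∩ b) = #(O ∩ b') := by
  intro b hb b' hb'
  obtain ⟨g, hg, rfl⟩ := hbt b hb b' hb'
  exact (card_inter_image_eq (hO g hg) b).symm

theorem apply_mem_filter_mem_orbit {X : Finset V} (hGX : ∀ g ∈ G, ∀ z ∈ X, g z ∈ X) (x : V)
    [DecidablePred (· ∈ MulAction.orbit G x)] :
    ∀ g ∈ G, ∀ z ∈ {w ∈ X | w ∈ MulAction.orbit G x},
      g z ∈ {w ∈ X | w ∈ MulAction.orbit G x} := by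
  intro g hg z hz
  rw [mem_filter] at hz ⊢
  exact ⟨hGX g hg z hz.1, MulAction.mem_orbit_of_mem_orbit (⟨g, hg⟩ : G) hz.2⟩

end BlockTransitive

theorem block_transitive_imp_point_transitive_general {V : Type*} [DecidableEq V]
    (X : Finset V) (B : Finset (Finset V)) (t v k : ℕ)
    (ht : 2 ≤ t) (htk : t < k) (hkv : k < v)
    (hD : IsDesignOn X t v k 1 B)
    (G : Subgroup (Equiv.Perm V))
    (hGX : ∀ g ∈ G, ∀ x ∈ X, g x ∈ X)
    (hbt : ∀ b ∈ B, ∀ b' ∈ B, ∃ g ∈ G, b.image (⇑g) = b') :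
    ∀ x ∈ X, ∀ y ∈ X, ∃ g ∈ G, g x = y := by
  classical
  intro x hx y hy
  suffices hyx : y ∈ MulAction.orbit G x by
    obtain ⟨⟨g, hg⟩, rfl⟩ := MulAction.mem_orbit_iff.1 hyx
    exact ⟨g, hg, rfl⟩
  by_contra hyx
  have hxy : x ≠ y := fun h => hyx (h ▸ MulAction.mem_orbit_self x)
  set O₁ := {z ∈ X | z ∈ MulAction.orbit G x}
  set O₂ := {w ∈ X | w ∈ MulAction.orbit G y}
  have hdisj : ∀ z ∈ O₁, ∀ w ∈ O₂, z ≠ w := by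
    rintro z hz _ hw rfl
    exact hyx <| MulAction.orbit_eq_iff.1 <|
      (MulAction.orbit_eq_iff.2 (mem_filter.1 hw).2).symm.trans
        (MulAction.orbit_eq_iff.2 (mem_filter.1 hz).2)
  have hr (z : V) (hz : z ∈ X) := hD.card_filter_mem_eq htk.le (by omega) hx hz
  have hsq : #{b ∈ B | x ∈ b} * #{b ∈ B | x ∈ b} = #B * #{b ∈ B | x ∈ b ∧ y ∈ b} :=
    mul_self_eq_card_mul_of_card_inter_eq
      (card_inter_eq_of_block_transitive hbt (apply_mem_filter_mem_orbit hGX x))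
      (card_inter_eq_of_block_transitive hbt (apply_mem_filter_mem_orbit hGX y))
      (fun z hz => hr z (mem_filter.1 hz).1) (fun w hw => hr w (mem_filter.1 hw).1)
      (fun z hz w hw => hD.card_filter_mem_and_mem_eq htk.le ht hx hy hxy (mem_filter.1 hz).1
        (mem_filter.1 hw).1 (hdisj z hz w hw))
      ⟨x, mem_filter.2 ⟨hx, MulAction.mem_orbit_self x⟩⟩
      ⟨y, mem_filter.2 ⟨hy, MulAction.mem_orbit_self y⟩⟩
  have hr_pos : 0 < #{b ∈ B | x ∈ b} := by
    simpa using hD.card_filter_superset_pos one_pos (by omega) (singleton_subset_iff.2 hx)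
      (by rw [card_singleton]; omega)
  exact hkv.ne <| Nat.eq_of_mul_self_eq_mul_of_mul_eq hr_pos (by omega) (by omega) hsq
    (hD.card_mul_eq_card_filter_mem_mul htk.le (by omega) hx)
    (hD.card_filter_mem_mul_eq htk.le ht hx hy hxy)

/-- Block's theorem for Steiner designs: a block-transitive group of automorphisms of a
non-trivial `t`-`(v,k,1)` design with `t ≥ 2` is point-transitive. -/
theorem block_transitive_imp_point_transitive {V : Type*} [DecidableEq V]
    (X : Finset V) (B : Finset (Finset V)) (t v k : ℕ)
    (ht : 2 ≤ t) (htk : t < k) (hkv : k < v)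
    (hD : IsDesignOn X t v k 1 B)
    (G : Subgroup (Equiv.Perm V))
    (hGX : ∀ g ∈ G, ∀ x ∈ X, g x ∈ X)
    (hGB : ∀ g ∈ G, ∀ b ∈ B, b.image (⇑g) ∈ B)
    (hbt : ∀ b ∈ B, ∀ b' ∈ B, ∃ g ∈ G, b.image (⇑g) = b') :
    ∀ x ∈ X, ∀ y ∈ X, ∃ g ∈ G, g x = y :=
  block_transitive_imp_point_transitive_general X B t v k ht htk hkv hD G hGX hbt
end

section
/- Let D be a non-trivial Steiner t-design with t ≥ 3 and let G ≤ Aut(D) act flag-transitively on D (transitively on incident point-block pairs). Then G acts 2-transitively on the points of D. -/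
open Finset

/-!
Write `λ_s` for the number of blocks through `s ≤ t` given points; it depends only on `s`.
Flag-transitivity makes `G` transitive on points and the stabiliser `G_x` transitive on the
blocks through `x`. If a `G_x`-orbit `O ∋ y` on `X \ {x}` missed a point `y'`, every block
through `x` would meet `O` in the same number `c` of points. Counting the flags `(b, z)` with
`z ∈ O` and `b` a block through `{x, y'}`, resp. through `{x, y}`, gives
`λ₂ c = |O| λ₃ = (|O| - 1) λ₃ + λ₂`, hence `λ₂ = λ₃`. But `λ₂ (k - 2) = λ₃ (v - 2)` and
`k < v` force `λ₃ < λ₂`.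
-/

section blocksThrough

variable {V : Type*} [DecidableEq V] {B : Finset (Finset V)} {S : Finset V} {b : Finset V}

def blocksThrough (B : Finset (Finset V)) (S : Finset V) : Finset (Finset V) :=
  {b ∈ B | S ⊆ b}

@[simp]
lemma mem_blocksThrough : b ∈ blocksThrough B S ↔ b ∈ B ∧ S ⊆ b :=
  mem_filter

lemma filter_mem_blocksThrough (z : V) :
    {b ∈ blocksThrough B S | z ∈ b} = blocksThrough B (insert z S) := by
  ext b
  simp only [mem_filter, mem_blocksThrough, insert_subset_iff]
  tauto

lemma sum_card_inter_blocksThrough (B : Finset (Finset V)) (S Z : Finset V) :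
    ∑ b ∈ blocksThrough B S, #(b ∩ Z) = ∑ z ∈ Z, #(blocksThrough B (insert z S)) := by
  simp_rw [← filter_mem_blocksThrough, inter_comm _ Z, ← filter_mem_eq_inter]
  exact sum_card_bipartiteAbove_eq_sum_card_bipartiteBelow (fun (b : Finset V) (z : V) => z ∈ b)

end blocksThrough

namespace IsDesignOn

variable {V : Type*} [DecidableEq V] {X : Finset V} {t v k lam : ℕ} {B : Finset (Finset V)}
  {S S' : Finset V}

theorem card_blocksThrough_mul_choose (hD : IsDesignOn X t v k lam B) (hS : S ⊆ X)
    (hSt : #S ≤ t) :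
    #(blocksThrough B S) * (k - #S).choose (t - #S) = lam * (v - #S).choose (t - #S) := by
  obtain ⟨hX, hB, hlam⟩ := hD
  have hcount := sum_card_bipartiteAbove_eq_sum_card_bipartiteBelow
    (s := blocksThrough B S) (t := {T ∈ X.powersetCard t | S ⊆ T}) (fun b T => T ⊆ b)
  rw [sum_const_nat (m := (k - #S).choose (t - #S)), sum_const_nat (m := lam),
    card_filter_powersetCard_subset _ _ _ hS hSt, hX] at hcount
  · rw [hcount, mul_comm]
  · intro T hT
    simp only [mem_filter, mem_powersetCard] at hT
    rw [← hlam T hT.1.1 hT.1.2]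
    congr 1
    ext b
    simp only [bipartiteBelow, mem_filter, mem_blocksThrough]
    exact ⟨fun h => ⟨h.1.1, h.2⟩, fun h => ⟨⟨h.1, hT.2.trans h.2⟩, h.2⟩⟩
  · intro b hb
    rw [mem_blocksThrough] at hb
    obtain ⟨hbX, hbk⟩ := hB b hb.1
    rw [← hbk, ← card_filter_powersetCard_subset _ _ _ hb.2 hSt]
    congr 1
    ext T
    simp only [bipartiteAbove, mem_filter, mem_powersetCard]
    exact ⟨fun h => ⟨⟨h.2, h.1.1.2⟩, h.1.2⟩, fun h => ⟨⟨⟨h.1.1.trans hbX, h.1.2⟩, h.2⟩, h.1.1⟩⟩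

theorem card_blocksThrough_eq (hD : IsDesignOn X t v k lam B) (htk : t ≤ k) (hS : S ⊆ X)
    (hS' : S' ⊆ X) (hSS' : #S = #S') (hSt : #S ≤ t) :
    #(blocksThrough B S) = #(blocksThrough B S') := by
  have h := hD.card_blocksThrough_mul_choose hS hSt
  have h' := hD.card_blocksThrough_mul_choose hS' (hSS' ▸ hSt)
  rw [← hSS'] at h'
  exact Nat.eq_of_mul_eq_mul_right (Nat.choose_pos (by omega)) (h.trans h'.symm)

theorem blocksThrough_nonempty (hD : IsDesignOn X t v k lam B) (hlam : 0 < lam)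
    (htv : t ≤ v) (hS : S ⊆ X) (hSt : #S ≤ t) : (blocksThrough B S).Nonempty := by
  have h := hD.card_blocksThrough_mul_choose hS hSt
  have hpos : 0 < lam * (v - #S).choose (t - #S) :=
    Nat.mul_pos hlam (Nat.choose_pos (by have := card_le_card hS; omega))
  rw [← card_pos]
  exact Nat.pos_of_mul_pos_right (h ▸ hpos)

theorem exists_mem_block (hD : IsDesignOn X t v k lam B) (hlam : 0 < lam) (ht : 1 ≤ t)
    (htv : t ≤ v) {x : V} (hx : x ∈ X) : ∃ b ∈ B, x ∈ b := by
  obtain ⟨b, hb⟩ := hD.blocksThrough_nonempty hlam htv (singleton_subset_iff.2 hx)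
    (by rwa [card_singleton])
  exact ⟨b, (mem_blocksThrough.1 hb).1, singleton_subset_iff.1 (mem_blocksThrough.1 hb).2⟩

theorem card_blocksThrough_mul_sub (hD : IsDesignOn X t v k lam B) (htk : t ≤ k)
    (hS : S ⊆ X) (hS' : S' ⊆ X) (hSS' : #S' = #S + 1) (hS't : #S' ≤ t) :
    #(blocksThrough B S) * (k - #S) = (v - #S) * #(blocksThrough B S') := by
  have hcount := sum_card_inter_blocksThrough B S (X \ S)
  rwa [sum_const_nat (m := k - #S), sum_const_nat (m := #(blocksThrough B S')),
    card_sdiff_of_subset hS, hD.1] at hcount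
  · intro z hz
    rw [mem_sdiff] at hz
    refine hD.card_blocksThrough_eq htk (insert_subset hz.1 hS) hS' ?_ ?_
    all_goals rw [card_insert_of_notMem hz.2]; omega
  · intro b hb
    rw [mem_blocksThrough] at hb
    obtain ⟨hbX, hbk⟩ := hD.2.1 b hb.1
    rw [← inter_sdiff_assoc, inter_eq_left.2 hbX, card_sdiff_of_subset hb.2, hbk]

theorem card_blocksThrough_lt (hD : IsDesignOn X t v k lam B) (hlam : 0 < lam) (htk : t ≤ k)
    (hkv : k < v) (hS' : S' ⊆ X) (hSS' : S ⊆ S') (hcard : #S' = #S + 1) (hS't : #S' ≤ t) :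
    #(blocksThrough B S') < #(blocksThrough B S) := by
  have h := hD.card_blocksThrough_mul_sub htk (hSS'.trans hS') hS' hcard hS't
  have hpos := card_pos.2 (hD.blocksThrough_nonempty hlam (by omega) hS' hS't)
  have hk : 0 < k - #S := by omega
  have hlt : (k - #S) * #(blocksThrough B S') < (k - #S) * #(blocksThrough B S) := by
    rw [mul_comm (k - #S) #(blocksThrough B S), h]
    exact Nat.mul_lt_mul_of_pos_right (by have := card_le_card hS'; omega) hpos
  exact Nat.lt_of_mul_lt_mul_left hlt

theorem card_blocksThrough_pair_eq (hD : IsDesignOn X t v k lam B) (ht : 2 ≤ t) (htk : t ≤ k)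
    {a b c d : V} (ha : a ∈ X) (hb : b ∈ X) (hc : c ∈ X) (hd : d ∈ X) (hab : a ≠ b)
    (hcd : c ≠ d) : #(blocksThrough B {a, b}) = #(blocksThrough B {c, d}) :=
  hD.card_blocksThrough_eq htk (by simp [insert_subset_iff, ha, hb])
    (by simp [insert_subset_iff, hc, hd]) (by rw [card_pair hab, card_pair hcd])
    (by rw [card_pair hab]; omega)

theorem card_blocksThrough_triple_eq (hD : IsDesignOn X t v k lam B) (ht : 3 ≤ t)
    (htk : t ≤ k) {a b c d e f : V} (ha : a ∈ X) (hb : b ∈ X) (hc : c ∈ X) (hd : d ∈ X)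
    (he : e ∈ X) (hf : f ∈ X) (hab : a ≠ b) (hac : a ≠ c) (hbc : b ≠ c) (hde : d ≠ e)
    (hdf : d ≠ f) (hef : e ≠ f) :
    #(blocksThrough B {a, b, c}) = #(blocksThrough B {d, e, f}) := by
  have habc : #{a, b, c} = 3 := card_eq_three.2 ⟨a, b, c, hab, hac, hbc, rfl⟩
  exact hD.card_blocksThrough_eq htk (by simp [insert_subset_iff, ha, hb, hc])
    (by simp [insert_subset_iff, hd, he, hf])
    (by rw [habc, card_eq_three.2 ⟨d, e, f, hde, hdf, hef, rfl⟩]) (by omega)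

theorem eq_erase_of_card_inter_eq (hD : IsDesignOn X t v k lam B) (hlam : 0 < lam)
    (ht : 3 ≤ t) (htk : t ≤ k) (hkv : k < v) {x y : V} (hx : x ∈ X) {O : Finset V}
    (hO : O ⊆ X.erase x) (hy : y ∈ O)
    (hmeet : ∀ b ∈ B, ∀ b' ∈ B, x ∈ b → x ∈ b' → #(b ∩ O) = #(b' ∩ O)) :
    O = X.erase x := by
  by_contra hne
  obtain ⟨y', hy'X, hy'O⟩ : ∃ y' ∈ X.erase x, y' ∉ O :=
    not_subset.1 fun h => hne (hO.antisymm h)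
  obtain ⟨hyx, hyX⟩ := mem_erase.1 (hO hy)
  obtain ⟨hy'x, hy'X⟩ := mem_erase.1 hy'X
  have hyy' : y ≠ y' := by rintro rfl; exact hy'O hy
  obtain ⟨b₀, hb₀⟩ := hD.blocksThrough_nonempty hlam (by omega) (S := {x, y})
    (by simp [insert_subset_iff, hx, hyX]) (by rw [card_pair hyx.symm]; omega)
  have hc : ∀ a, ∀ b ∈ blocksThrough B {x, a}, #(b ∩ O) = #(b₀ ∩ O) := by
    intro a b hb
    simp only [mem_blocksThrough, insert_subset_iff] at hb hb₀
    exact hmeet b hb.1 b₀ hb₀.1 hb.2.1 hb₀.2.1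
  have hO_mem : ∀ z ∈ O, z ∈ X ∧ z ≠ x := fun z hz => (mem_erase.1 (hO hz)).symm
  set lam₂ := #(blocksThrough B {x, y})
  set lam₃ := #(blocksThrough B {x, y, y'})
  have count_y' : lam₂ * #(b₀ ∩ O) = #O * lam₃ := by
    have h := sum_card_inter_blocksThrough B {x, y'} O
    rwa [sum_const_nat (hc y'), sum_const_nat fun z hz => hD.card_blocksThrough_triple_eq ht htk
      (hO_mem z hz).1 hx hy'X hx hyX hy'X (hO_mem z hz).2 (by rintro rfl; exact hy'O hz) hy'x.symm
      hyx.symm hy'x.symm hyy',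
      hD.card_blocksThrough_pair_eq (by omega) htk hx hy'X hx hyX hy'x.symm hyx.symm] at h
  have count_y : lam₂ * #(b₀ ∩ O) = (#O - 1) * lam₃ + lam₂ := by
    have h := sum_card_inter_blocksThrough B {x, y} O
    rwa [← sum_erase_add _ _ hy, insert_eq_of_mem (mem_insert_of_mem (mem_singleton_self y)),
      sum_const_nat (hc y), sum_const_nat fun z hz => hD.card_blocksThrough_triple_eq ht htk
        (hO_mem z (mem_of_mem_erase hz)).1 hx hyX hx hyX hy'X (hO_mem z (mem_of_mem_erase hz)).2
        (ne_of_mem_erase hz) hyx.symm hyx.symm hy'x.symm hyy',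
      card_erase_of_mem hy] at h
  have hlt := hD.card_blocksThrough_lt hlam htk hkv (S := {x, y}) (S' := {x, y, y'})
    (by simp [insert_subset_iff, hx, hyX, hy'X]) (by simp [insert_subset_iff])
    (by rw [card_eq_three.2 ⟨x, y, y', hyx.symm, hy'x.symm, hyy', rfl⟩, card_pair hyx.symm])
    (by rw [card_eq_three.2 ⟨x, y, y', hyx.symm, hy'x.symm, hyy', rfl⟩]; omega)
  obtain ⟨m, hm⟩ : ∃ m, #O = m + 1 := ⟨#O - 1, by have := card_pos.2 ⟨y, hy⟩; omega⟩
  rw [hm, add_mul, one_mul] at count_y'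
  rw [hm, Nat.add_sub_cancel] at count_y
  omega

end IsDesignOn

section FlagTransitive

variable {V : Type*} [DecidableEq V] {X : Finset V} {B : Finset (Finset V)}
  {G : Subgroup (Equiv.Perm V)}

theorem card_inter_eq_of_flag_transitive
    (hft : ∀ b ∈ B, ∀ b' ∈ B, ∀ x ∈ b, ∀ x' ∈ b', ∃ g ∈ G, b.image (⇑g) = b' ∧ g x = x')
    {x : V} {O : Finset V} (hO : ∀ g ∈ G, g x = x → ∀ z ∈ O, g z ∈ O) :
    ∀ b ∈ B, ∀ b' ∈ B, x ∈ b → x ∈ b' → #(b ∩ O) = #(b' ∩ O) := by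
  suffices h : ∀ b ∈ B, ∀ b' ∈ B, x ∈ b → x ∈ b' → #(b ∩ O) ≤ #(b' ∩ O) from
    fun b hb b' hb' hxb hxb' => (h b hb b' hb' hxb hxb').antisymm (h b' hb' b hb hxb' hxb)
  intro b hb b' hb' hxb hxb'
  obtain ⟨g, hg, rfl, hgx⟩ := hft b hb b' hb' x hxb x hxb'
  calc #(b ∩ O) = #((b ∩ O).image g) := (card_image_of_injective _ g.injective).symm
    _ ≤ #(b.image g ∩ O) := card_le_card <| image_subset_iff.2 fun z hz =>
      mem_inter.2 ⟨mem_image_of_mem _ (mem_inter.1 hz).1, hO g hg hgx z (mem_inter.1 hz).2⟩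

theorem exists_fix_apply_eq_of_flag_transitive {t v k lam : ℕ}
    (hD : IsDesignOn X t v k lam B) (hlam : 0 < lam) (ht : 3 ≤ t) (htk : t ≤ k) (hkv : k < v)
    (hGX : ∀ g ∈ G, ∀ x ∈ X, g x ∈ X)
    (hft : ∀ b ∈ B, ∀ b' ∈ B, ∀ x ∈ b, ∀ x' ∈ b', ∃ g ∈ G, b.image (⇑g) = b' ∧ g x = x')
    {x y y' : V} (hx : x ∈ X) (hy : y ∈ X.erase x) (hy' : y' ∈ X.erase x) :
    ∃ g ∈ G, g x = x ∧ g y = y' := by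
  classical
  set O := {z ∈ X.erase x | ∃ g ∈ G, g x = x ∧ g y = z}
  have hyO : y ∈ O := mem_filter.2 ⟨hy, 1, G.one_mem, rfl, rfl⟩
  have hO : ∀ g ∈ G, g x = x → ∀ z ∈ O, g z ∈ O := by
    intro g hg hgx z hz
    obtain ⟨hzx, g₀, hg₀, hg₀x, rfl⟩ := mem_filter.1 hz
    refine mem_filter.2 ⟨mem_erase.2 ⟨?_, hGX g hg _ (mem_of_mem_erase hzx)⟩,
      g * g₀, G.mul_mem hg hg₀, by simp [hg₀x, hgx], rfl⟩
    exact fun h => ne_of_mem_erase hzx (g.injective (h.trans hgx.symm))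
  have hOX := hD.eq_erase_of_card_inter_eq hlam ht htk hkv hx (filter_subset _ _) hyO
    (card_inter_eq_of_flag_transitive hft hO)
  obtain ⟨-, g, hg, hgx, hgy⟩ := mem_filter.1 (hOX ▸ hy')
  exact ⟨g, hg, hgx, hgy⟩

end FlagTransitive

theorem flag_transitive_imp_two_transitive_general {V : Type*} [DecidableEq V]
    (X : Finset V) (B : Finset (Finset V)) (t v k : ℕ)
    (ht : 3 ≤ t) (htk : t < k) (hkv : k < v)
    (hD : IsDesignOn X t v k 1 B)
    (G : Subgroup (Equiv.Perm V))
    (hGX : ∀ g ∈ G, ∀ x ∈ X, g x ∈ X)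
    (hft : ∀ b ∈ B, ∀ b' ∈ B, ∀ x ∈ b, ∀ x' ∈ b',
      ∃ g ∈ G, b.image (⇑g) = b' ∧ g x = x') :
    ∀ x ∈ X, ∀ y ∈ X, ∀ x' ∈ X, ∀ y' ∈ X, x ≠ y → x' ≠ y' →
      ∃ g ∈ G, g x = x' ∧ g y = y' := by
  intro x hx y hy x' hx' y' hy' hxy hxy'
  obtain ⟨b, hb, hxb⟩ := hD.exists_mem_block one_pos (by omega) (by omega) hx
  obtain ⟨b', hb', hx'b'⟩ := hD.exists_mem_block one_pos (by omega) (by omega) hx'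
  obtain ⟨g₁, hg₁, -, hg₁x⟩ := hft b hb b' hb' x hxb x' hx'b'
  have hg₁y : g₁ y ∈ X.erase x' :=
    mem_erase.2 ⟨fun h => hxy (g₁.injective (hg₁x.trans h.symm)), hGX g₁ hg₁ y hy⟩
  obtain ⟨g₂, hg₂, hg₂x, hg₂y⟩ := exists_fix_apply_eq_of_flag_transitive hD one_pos ht htk.le
    hkv hGX hft hx' hg₁y (mem_erase.2 ⟨hxy'.symm, hy'⟩)
  exact ⟨g₂ * g₁, G.mul_mem hg₂ hg₁, by simp [hg₁x, hg₂x], by simp [hg₂y]⟩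

/-- A flag-transitive group of automorphisms of a non-trivial Steiner `t`-design with
`t ≥ 3` acts point `2`-transitively. -/
theorem flag_transitive_imp_two_transitive {V : Type*} [DecidableEq V]
    (X : Finset V) (B : Finset (Finset V)) (t v k : ℕ)
    (ht : 3 ≤ t) (htk : t < k) (hkv : k < v)
    (hD : IsDesignOn X t v k 1 B)
    (G : Subgroup (Equiv.Perm V))
    (hGX : ∀ g ∈ G, ∀ x ∈ X, g x ∈ X)
    (hGB : ∀ g ∈ G, ∀ b ∈ B, b.image (⇑g) ∈ B)
    (hft : ∀ b ∈ B, ∀ b' ∈ B, ∀ x ∈ b, ∀ x' ∈ b',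
      ∃ g ∈ G, b.image (⇑g) = b' ∧ g x = x') :
    ∀ x ∈ X, ∀ y ∈ X, ∀ x' ∈ X, ∀ y' ∈ X, x ≠ y → x' ≠ y' →
      ∃ g ∈ G, g x = x' ∧ g y = y' :=
  flag_transitive_imp_two_transitive_general X B t v k ht htk hkv hD G hGX hft
end

section
/- The generalized Ramanujan–Nagell equation x² - 17 = 2ⁿ has exactly four solutions in positive integers: (x,n) = (5,3), (7,5), (9,6), (23,9). -/
/-!
For even `n = 2m`, factor `(x - 2^m)(x + 2^m) = 17`, which forces `m = 3`.

For odd `n = 2k + 1`, `(x, 2^k)` solves `x² - 2y² = 17`. Dividing `x + y√2` by `3 + 2√2`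
while `y > 8` descends to `5 + 2√2` or `7 + 4√2 = (3 + 2√2)(5 - 2√2)`, so `x + 2^k√2` is
`(3 + 2√2)^j (5 ± 2√2)`. Modulo `8224 = 2⁵ · 257` these orbits have period 64, while
`2^k` (`k ≥ 5`) runs through 16 residues, none of which occurs as the `√2`-coordinate of the
orbits. Hence `k ≤ 4`, and the remaining cases are finite.
-/

open Function

theorem eq_eight_of_sq_eq_sq_add_seventeen {x t : ℕ} (h : x ^ 2 = t ^ 2 + 17) : t = 8 := by
  have h17 : (x + t) * (x - t) = 17 := by
    rw [← Nat.sq_sub_sq]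
    omega
  rcases (Nat.dvd_prime (by norm_num)).1 (Dvd.intro_left _ h17) with h1 | h1 <;>
    rw [h1] at h17 <;> omega

/-- Multiplication of `x + y√2` by `3 + 2√2`. -/
def pellStep {R : Type*} [CommRing R] (p : R × R) : R × R :=
  (3 * p.1 + 4 * p.2, 2 * p.1 + 3 * p.2)

theorem semiconj_prodMap_pellStep {R S : Type*} [CommRing R] [CommRing S] (f : R →+* S) :
    Semiconj (Prod.map f f) pellStep pellStep := by
  intro p
  simp [pellStep, map_ofNat f]

theorem exists_iterate_pellStep_eq {x y : ℤ} (hx : 0 ≤ x) (hy : 0 ≤ y)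
    (h : x ^ 2 - 2 * y ^ 2 = 17) :
    ∃ j : ℕ, pellStep^[j] (5, 2) = (x, y) ∨ pellStep^[j] (5, -2) = (x, y) := by
  by_cases hy8 : y ≤ 8
  · have hx12 : x ≤ 12 := by nlinarith
    interval_cases y <;> interval_cases x <;>
      first | exact ⟨0, .inl rfl⟩ | exact ⟨1, .inr (by decide)⟩ | norm_num at h
  · obtain ⟨j, hj⟩ := exists_iterate_pellStep_eq (x := 3 * x - 4 * y) (y := 3 * y - 2 * x)
      (by nlinarith) (by nlinarith) (by linear_combination h)
    have hstep : pellStep (3 * x - 4 * y, 3 * y - 2 * x) = (x, y) := by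
      simp only [pellStep, Prod.mk.injEq]
      constructor <;> ring
    refine ⟨j + 1, ?_⟩
    rcases hj with hj | hj <;> simp [iterate_succ_apply', hj, hstep]
termination_by y.toNat
decreasing_by
  have : y < x := by nlinarith
  omega

theorem iterate_pellStep_snd_ne_two_pow (j : ℕ) {k : ℕ} (hk : 5 ≤ k) :
    (pellStep^[j] ((5, 2) : ZMod 8224 × ZMod 8224)).2 ≠ 2 ^ k ∧
      (pellStep^[j] ((5, -2) : ZMod 8224 × ZMod 8224)).2 ≠ 2 ^ k := by
  have hper₁ : IsPeriodicPt pellStep 64 ((5, 2) : ZMod 8224 × ZMod 8224) := by decide +kernel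
  have hper₂ : IsPeriodicPt pellStep 64 ((5, -2) : ZMod 8224 × ZMod 8224) := by decide +kernel
  have hper₃ : IsPeriodicPt ((2 : ZMod 8224) * ·) 16 (2 ^ 5) := by decide +kernel
  have hcheck : ∀ j < 64, ∀ r < 16,
      (pellStep^[j] ((5, 2) : ZMod 8224 × ZMod 8224)).2 ≠ 2 ^ r * 2 ^ 5 ∧
        (pellStep^[j] ((5, -2) : ZMod 8224 × ZMod 8224)).2 ≠ 2 ^ r * 2 ^ 5 := by
    decide +kernel
  have hpow : (2 : ZMod 8224) ^ k = 2 ^ ((k - 5) % 16) * 2 ^ 5 := by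
    rw [← mul_left_iterate_apply, hper₃.iterate_mod_apply, mul_left_iterate_apply,
      ← pow_add, Nat.sub_add_cancel hk]
  rw [hpow, ← hper₁.iterate_mod_apply, ← hper₂.iterate_mod_apply]
  exact hcheck _ (j.mod_lt (by norm_num)) _ ((k - 5).mod_lt (by norm_num))

theorem le_four_of_sq_eq_two_pow_two_mul_add_one_add_seventeen {x k : ℕ}
    (h : x ^ 2 = 2 ^ (2 * k + 1) + 17) : k ≤ 4 := by
  by_contra! hk
  have hpell : (x : ℤ) ^ 2 - 2 * (2 ^ k : ℤ) ^ 2 = 17 := by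
    have hx : (x : ℤ) ^ 2 = 2 ^ (2 * k + 1) + 17 := by exact_mod_cast h
    rw [hx]
    ring
  obtain ⟨j, hj⟩ := exists_iterate_pellStep_eq (Int.natCast_nonneg x) (by positivity) hpell
  let f := Int.castRingHom (ZMod 8224)
  have hcast : ∀ b : ℤ × ℤ, pellStep^[j] b = ((x : ℤ), 2 ^ k) →
      (pellStep^[j] (Prod.map f f b)).2 = 2 ^ k := by
    intro b hb
    rw [← (semiconj_prodMap_pellStep f).iterate_right j b, hb]
    simp
  rcases hj with hj | hj
  · exact (iterate_pellStep_snd_ne_two_pow j hk).1 (by simpa using hcast _ hj)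
  · exact (iterate_pellStep_snd_ne_two_pow j hk).2 (by simpa using hcast _ hj)

theorem ramanujan_nagell_seventeen_general (x n : ℕ) :
    x ^ 2 = 2 ^ n + 17 ↔
      (x = 5 ∧ n = 3) ∨ (x = 7 ∧ n = 5) ∨ (x = 9 ∧ n = 6) ∨ (x = 23 ∧ n = 9) := by
  refine ⟨fun h => ?_, ?_⟩
  · have hn9 : n ≤ 9 := by
      obtain ⟨k, rfl | rfl⟩ := Nat.even_or_odd' n
      · have h' : x ^ 2 = (2 ^ k) ^ 2 + 17 := by rwa [← pow_mul, mul_comm k 2]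
        have h8 : 2 ^ k = 2 ^ 3 := eq_eight_of_sq_eq_sq_add_seventeen h'
        have := Nat.pow_right_injective le_rfl h8
        omega
      · have := le_four_of_sq_eq_two_pow_two_mul_add_one_add_seventeen h
        omega
    have hx23 : x ≤ 23 := by
      have : 2 ^ n ≤ 2 ^ 9 := Nat.pow_le_pow_right (by norm_num) hn9
      nlinarith
    interval_cases n <;> interval_cases x <;> omega
  · rintro (⟨rfl, rfl⟩ | ⟨rfl, rfl⟩ | ⟨rfl, rfl⟩ | ⟨rfl, rfl⟩) <;> norm_num

/-- The generalized Ramanujan–Nagell equation `x² - 17 = 2ⁿ` has exactly the four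
solutions `(x,n) = (5,3), (7,5), (9,6), (23,9)` in positive integers. -/
theorem ramanujan_nagell_seventeen (x n : ℕ) (hx : 0 < x) (hn : 0 < n) :
    x ^ 2 = 2 ^ n + 17 ↔
      (x = 5 ∧ n = 3) ∨ (x = 7 ∧ n = 5) ∨ (x = 9 ∧ n = 6) ∨ (x = 23 ∧ n = 9) :=
  ramanujan_nagell_seventeen_general x n
end

section
/- The only solution in positive integers (e,k) with e ≥ 1 of the equation 2^{2e+3} = k² - 3k - 2 is (e,k) = (2,13). -/
/-!
With `x = 2k - 3` and `y = 2^(e+2)` the equation becomes `x² - 2y² = 17`. Every positive solution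
of this Pell-type equation descends, under multiplication by the unit `3 - 2√2`, to `(5, 2)` or
`(7, 4)`, so the solutions are the terms `pell17 n`. They are periodic modulo `32`,
and `32 ∣ y` forces the index into two residue classes modulo `32`. Modulo the prime
`665857 = (ε⁸ + ε⁻⁸)/2`, where `ε = 3 + 2√2`, we have `ε¹⁶ = 2 · 665857 · ε⁸ - 1 ≡ -1`, so on these
classes `y` is, up to sign, congruent to one of two explicit non-residues. Since `665857 ≡ 1 (mod 8)`,
both `-1` and `2` are squares modulo it, so `y` cannot be a power of `2` once `32 ∣ y`. The cases
`e ≤ 2` are checked by hand.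
-/

/-- Multiplication of `x + y√2` by `3 + 2√2`. -/
def pell17Step (p : ℤ × ℤ) : ℤ × ℤ := (3 * p.1 + 4 * p.2, 2 * p.1 + 3 * p.2)

def pell17 : ℕ → ℤ × ℤ
  | 0 => (5, 2)
  | 1 => (7, 4)
  | n + 2 => pell17Step (pell17 n)

theorem pell17_add_two (n : ℕ) : pell17 (n + 2) = pell17Step (pell17 n) := rfl

theorem exists_pell17_eq {x y : ℤ} (hx : 0 < x) (hy : 0 < y) (h : x ^ 2 = 2 * y ^ 2 + 17) :
    ∃ n, pell17 n = (x, y) := by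
  induction hN : y.toNat using Nat.strong_induction_on generalizing x y with
  | _ N ih =>
    by_cases hy8 : y ≤ 8
    · have hx12 : x ≤ 12 := by nlinarith
      interval_cases y <;> interval_cases x <;> first
        | exact ⟨0, rfl⟩
        | exact ⟨1, rfl⟩
        | norm_num at h
    · have hyx : y < x := by nlinarith
      obtain ⟨n, hn⟩ := ih (3 * y - 2 * x).toNat (by omega) (x := 3 * x - 4 * y)
        (by nlinarith) (by nlinarith) (by nlinarith) rfl
      refine ⟨n + 2, ?_⟩
      rw [pell17_add_two, hn, pell17Step, Prod.mk.injEq]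
      constructor <;> ring

theorem pell17_add_modEq {m c : ℤ} {N : ℕ}
    (h₀ : (pell17 N).1 ≡ c * (pell17 0).1 [ZMOD m] ∧ (pell17 N).2 ≡ c * (pell17 0).2 [ZMOD m])
    (h₁ : (pell17 (N + 1)).1 ≡ c * (pell17 1).1 [ZMOD m] ∧
      (pell17 (N + 1)).2 ≡ c * (pell17 1).2 [ZMOD m]) :
    ∀ n, (pell17 (N + n)).1 ≡ c * (pell17 n).1 [ZMOD m] ∧
      (pell17 (N + n)).2 ≡ c * (pell17 n).2 [ZMOD m]
  | 0 => h₀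
  | 1 => h₁
  | n + 2 => by
    obtain ⟨hx, hy⟩ := pell17_add_modEq h₀ h₁ n
    rw [← add_assoc, pell17_add_two, pell17_add_two, pell17Step, pell17Step]
    constructor
    · calc _ ≡ 3 * (c * (pell17 n).1) + 4 * (c * (pell17 n).2) [ZMOD m] :=
            (hx.mul_left 3).add (hy.mul_left 4)
        _ = _ := by ring
    · calc _ ≡ 2 * (c * (pell17 n).1) + 3 * (c * (pell17 n).2) [ZMOD m] :=
            (hx.mul_left 2).add (hy.mul_left 3)
        _ = _ := by ring

theorem pell17_snd_add_mul_modEq {m c : ℤ} {N : ℕ}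
    (h₀ : (pell17 N).1 ≡ c * (pell17 0).1 [ZMOD m] ∧ (pell17 N).2 ≡ c * (pell17 0).2 [ZMOD m])
    (h₁ : (pell17 (N + 1)).1 ≡ c * (pell17 1).1 [ZMOD m] ∧
      (pell17 (N + 1)).2 ≡ c * (pell17 1).2 [ZMOD m]) (q n : ℕ) :
    (pell17 (N * q + n)).2 ≡ c ^ q * (pell17 n).2 [ZMOD m] := by
  induction q with
  | zero => simp [Int.ModEq.refl]
  | succ q ih =>
    calc (pell17 (N * (q + 1) + n)).2 = (pell17 (N + (N * q + n))).2 := by ring_nf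
      _ ≡ c * (pell17 (N * q + n)).2 [ZMOD m] := (pell17_add_modEq h₀ h₁ _).2
      _ ≡ c * (c ^ q * (pell17 n).2) [ZMOD m] := ih.mul_left c
      _ = c ^ (q + 1) * (pell17 n).2 := by ring

theorem pell17_snd_modEq_mod_32 (n : ℕ) : (pell17 n).2 ≡ (pell17 (n % 32)).2 [ZMOD 32] := by
  have h := pell17_snd_add_mul_modEq (m := 32) (c := 1) (N := 32)
    (by constructor <;> decide) (by constructor <;> decide) (n / 32) (n % 32)
  rwa [Nat.div_add_mod, one_pow, one_mul] at h

theorem mod_32_of_dvd_pell17_snd {n : ℕ} (h : 32 ∣ (pell17 n).2) :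
    n % 32 = 13 ∨ n % 32 = 18 := by
  have h0 : (pell17 (n % 32)).2 ≡ 0 [ZMOD 32] :=
    (pell17_snd_modEq_mod_32 n).symm.trans (Int.modEq_zero_iff_dvd.2 h)
  have hr := Nat.mod_lt n (show 32 > 0 by norm_num)
  generalize n % 32 = r at h0 hr ⊢
  interval_cases r <;> revert h0 <;> decide

theorem jacobiSym_pell17_snd {n : ℕ} (hn : n % 32 = 13 ∨ n % 32 = 18) :
    jacobiSym (pell17 n).2 665857 = -1 := by
  have h := pell17_snd_add_mul_modEq (m := 665857) (c := -1) (N := 32)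
    (by constructor <;> decide) (by constructor <;> decide) (n / 32) (n % 32)
  rw [Nat.div_add_mod] at h
  have hr : jacobiSym (pell17 (n % 32)).2 665857 = -1 := by
    rcases hn with hn | hn <;> rw [hn]
    · rw [show (pell17 13).2 = 175424 by decide]; norm_num
    · rw [show (pell17 18).2 = 21482848 by decide]; norm_num
  rw [jacobiSym.mod_left' h, jacobiSym.mul_left, jacobiSym.pow_left, hr]
  norm_num

theorem pell17_snd_ne_two_pow {n m : ℕ} (hm : 5 ≤ m) : (pell17 n).2 ≠ 2 ^ m := by
  intro h
  have hdvd : 32 ∣ (pell17 n).2 := h ▸ (pow_dvd_pow 2 hm : (2 : ℤ) ^ 5 ∣ 2 ^ m)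
  have hJ := jacobiSym_pell17_snd (mod_32_of_dvd_pell17_snd hdvd)
  rw [h, jacobiSym.pow_left] at hJ
  norm_num at hJ

theorem suzuki_case_equation_general (e k : ℕ) (he : 1 ≤ e) :
    k ^ 2 = 2 ^ (2 * e + 3) + 3 * k + 2 ↔ e = 2 ∧ k = 13 := by
  refine ⟨fun h => ?_, by rintro ⟨rfl, rfl⟩; norm_num⟩
  by_cases he3 : 3 ≤ e
  · exfalso
    have hZ : (k : ℤ) ^ 2 = 2 ^ (2 * e + 3) + 3 * k + 2 := by exact_mod_cast h
    have hpell : (2 * (k : ℤ) - 3) ^ 2 = 2 * (2 ^ (e + 2)) ^ 2 + 17 := by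
      rw [← pow_mul, show (e + 2) * 2 = 2 * e + 3 + 1 by ring, pow_succ]
      linear_combination 4 * hZ
    have hx : 0 < 2 * (k : ℤ) - 3 := by
      by_contra! hx
      nlinarith [pow_le_pow_right₀ (show (1 : ℤ) ≤ 2 by norm_num) (show 3 ≤ e + 2 by omega)]
    obtain ⟨n, hn⟩ := exists_pell17_eq hx (by positivity) hpell
    exact pell17_snd_ne_two_pow (show 5 ≤ e + 2 by omega) (by rw [hn])
  · have hk13 : k ≤ 13 := by interval_cases e <;> norm_num at h <;> nlinarith
    interval_cases e <;> interval_cases k <;> simp_all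

/-- The only solution in positive integers `(e,k)` with `e ≥ 1` of
`2^(2e+3) = k² - 3k - 2` is `(e,k) = (2,13)`. -/
theorem suzuki_case_equation (e k : ℕ) (he : 1 ≤ e) (hk : 1 ≤ k) :
    k ^ 2 = 2 ^ (2 * e + 3) + 3 * k + 2 ↔ e = 2 ∧ k = 13 :=
  suzuki_case_equation_general e k he
end

section
/- Let G ≤ AΓL(1,q) be a 2-transitive permutation group on GF(q), where q = p^d with p an odd prime, and let P be a Sylow 2-subgroup of G. If 2^m exactly divides p-1, then 2^m divides |P ∩ AGL(1,q)|; moreover if p ≡ 3 (mod 4) and d is even and 2^{m̄} exactly divides p+1, then 2^{m̄} divides |P ∩ AGL(1,q)|. -/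
/-!
The ring automorphism part of an element of `AΓL(1,q)` is unique, so it defines a homomorphism
`G → Aut(GF(q))` whose kernel is `G ∩ AGL(1,q)`; its index therefore divides `|Aut(GF(q))| = d`.
Write `d = 2^s t` with `t` odd. Since `G` is 2-transitive, `q - 1` divides `|G|`, so if
`2^(c+s) ∣ q - 1` then `2^(c+s)` divides `|P|`, while `|P : P ∩ AGL(1,q)|` is a power of two
dividing the index of the kernel, hence dividing `2^s`; so `2^c ∣ |P ∩ AGL(1,q)|`.
Finally `2^(m+s) ∣ p^d - 1`, and `2^(m̄+s) ∣ p^d - 1` when `d` is even, because squaring an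
odd number raises the power of two dividing it minus one, and `(p^t)^2 - 1 = (p^t - 1)(p^t + 1)`.
-/

namespace Equiv.Perm

variable {F : Type*} [Field F]

def IsSemiaffine (σ : F ≃+* F) (g : Equiv.Perm F) : Prop :=
  ∃ a b : F, a ≠ 0 ∧ ∀ x, g x = a * σ x + b

theorem isSemiaffine_one : IsSemiaffine (1 : F ≃+* F) 1 :=
  ⟨1, 0, one_ne_zero, fun x => by simp⟩

theorem IsSemiaffine.mul {σ τ : F ≃+* F} {g h : Equiv.Perm F} (hg : IsSemiaffine σ g)
    (hh : IsSemiaffine τ h) : IsSemiaffine (σ * τ) (g * h) := by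
  obtain ⟨a, b, ha, hg⟩ := hg
  obtain ⟨a', b', ha', hh⟩ := hh
  refine ⟨a * σ a', a * σ b' + b, mul_ne_zero ha ((map_ne_zero σ).mpr ha'), fun x => ?_⟩
  rw [Perm.mul_apply, hh, hg, map_add, map_mul, RingAut.mul_apply]
  ring

theorem IsSemiaffine.unique {σ τ : F ≃+* F} {g : Equiv.Perm F} (hσ : IsSemiaffine σ g)
    (hτ : IsSemiaffine τ g) : σ = τ := by
  obtain ⟨a, b, ha0, hσ⟩ := hσ
  obtain ⟨a', b', -, hτ⟩ := hτ
  have hb : b = b' := by simpa using (hσ 0).symm.trans (hτ 0)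
  have ha : a = a' := by simpa [hb] using (hσ 1).symm.trans (hτ 1)
  ext x
  simpa [← ha, hb, mul_right_inj' ha0] using (hσ x).symm.trans (hτ x)

end Equiv.Perm

namespace Subgroup

variable {F : Type*} [Field F]

noncomputable def autPart (G : Subgroup (Equiv.Perm F))
    (hG : ∀ g ∈ G, ∃ σ, Equiv.Perm.IsSemiaffine σ g) : G →* (F ≃+* F) where
  toFun g := (hG g g.2).choose
  map_one' := (hG 1 G.one_mem).choose_spec.unique Equiv.Perm.isSemiaffine_one
  map_mul' g h := (hG _ (g * h).2).choose_spec.unique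
    ((hG g g.2).choose_spec.mul (hG h h.2).choose_spec)

theorem mem_ker_autPart_iff {G : Subgroup (Equiv.Perm F)}
    {hG : ∀ g ∈ G, ∃ σ, Equiv.Perm.IsSemiaffine σ g} {g : G} :
    g ∈ (autPart G hG).ker ↔ Equiv.Perm.IsSemiaffine 1 (g : Equiv.Perm F) := by
  have hσ := (hG g g.2).choose_spec
  refine ⟨fun h => ?_, fun h => hσ.unique h⟩
  have h1 : (hG g g.2).choose = 1 := MonoidHom.mem_ker.mp h
  rwa [h1] at hσ

end Subgroup

theorem FiniteField.card_ringEquiv {F : Type*} [Field F] [Fintype F] {p d : ℕ} [Fact p.Prime]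
    (hF : Fintype.card F = p ^ d) : Nat.card (F ≃+* F) = d := by
  have := charP_of_card_eq_prime_pow hF
  let := ZMod.algebra F p
  have e : (F ≃+* F) ≃ (F ≃ₐ[ZMod p] F) :=
    { toFun := fun f => AlgEquiv.ofRingEquiv (f := f) fun x =>
        RingHom.congr_fun (Subsingleton.elim ((f : F →+* F).comp (algebraMap (ZMod p) F)) _) x
      invFun := AlgEquiv.toRingEquiv }
  rw [Nat.card_congr e, IsGalois.card_aut_eq_finrank]
  apply Nat.pow_right_injective (Fact.out : p.Prime).two_le
  change p ^ _ = p ^ d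
  rw [← hF, Module.card_eq_pow_finrank (K := ZMod p), ZMod.card]

theorem Subgroup.card_mul_sub_one_dvd_card {α : Type*} [Finite α] [Nontrivial α]
    (G : Subgroup (Equiv.Perm α))
    (h2t : ∀ x y x' y' : α, x ≠ y → x' ≠ y' → ∃ g ∈ G, g x = x' ∧ g y = y') :
    Nat.card α * (Nat.card α - 1) ∣ Nat.card G := by
  obtain ⟨x, y, hxy⟩ := exists_pair_ne α
  have horbit : MulAction.orbit G (x, y) = {w : α × α | w.1 ≠ w.2} := by
    ext ⟨x', y'⟩
    refine ⟨?_, fun h => ?_⟩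
    · rintro ⟨g, hg⟩
      simp only [← hg, Set.mem_ofPred_eq]
      exact (g : Equiv.Perm α).injective.ne hxy
    · obtain ⟨g, hg, hx, hy⟩ := h2t x y x' y' hxy h
      exact ⟨⟨g, hg⟩, Prod.ext hx hy⟩
  have hcard : {w : α × α | w.1 ≠ w.2}.ncard = Nat.card α * (Nat.card α - 1) := by
    classical
    have := Fintype.ofFinite α
    have hoffDiag : {w : α × α | w.1 ≠ w.2} = ↑(Finset.univ : Finset α).offDiag := by
      ext; simp
    rw [hoffDiag, Set.ncard_coe_finset, Finset.offDiag_card, Nat.mul_sub_one, Finset.card_univ,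
      Nat.card_eq_fintype_card]
  rw [← hcard, ← horbit, ← MulAction.index_stabilizer]
  exact Subgroup.index_dvd_card _

theorem Sylow.pow_dvd_card_inf_normal {G : Type*} [Group G] [Finite G] {r c s t : ℕ}
    [Fact r.Prime] (P : Sylow r G) {N : Subgroup G} [N.Normal]
    (hG : r ^ (c + s) ∣ Nat.card G) (hN : N.index ∣ r ^ s * t) (ht : ¬ r ∣ t) :
    r ^ c ∣ Nat.card ↥(P ⊓ N : Subgroup G) := by
  have hP : r ^ (c + s) ∣ Nat.card P := P.pow_dvd_card_of_pow_dvd_card hG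
  have hsplit : Nat.card ↥(P ⊓ N : Subgroup G) * N.relIndex P = Nat.card P := by
    rw [← Subgroup.inf_relIndex_left, ← Subgroup.relIndex_bot_left,
      ← Subgroup.relIndex_bot_left, Subgroup.relIndex_mul_relIndex _ _ _ bot_le inf_le_left]
  have hrel : N.relIndex P ∣ r ^ s := by
    obtain ⟨k, hk⟩ := P.isPGroup'.exists_card_eq
    obtain ⟨j, -, hj⟩ :=
      (Nat.dvd_prime_pow Fact.out).mp (hk ▸ Subgroup.relIndex_dvd_card N P)
    have hcop : Nat.Coprime (N.relIndex P) t :=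
      hj ▸ Nat.Coprime.pow_left j ((Nat.Prime.coprime_iff_not_dvd Fact.out).mpr ht)
    exact hcop.dvd_of_dvd_mul_right ((Subgroup.relIndex_dvd_index_of_normal N P).trans hN)
  rw [pow_add] at hP
  exact Nat.dvd_of_mul_dvd_mul_right (pow_pos (Fact.out : r.Prime).pos s)
    (hP.trans (hsplit ▸ mul_dvd_mul_left _ hrel))

theorem Odd.two_pow_succ_dvd_sq_sub_one {n k : ℕ} (hn : Odd n)
    (h : 2 ^ k ∣ n - 1 ∨ 2 ^ k ∣ n + 1) :
    2 ^ (k + 1) ∣ n ^ 2 - 1 := by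
  have hfactor : n ^ 2 - 1 = (n + 1) * (n - 1) := by simpa using Nat.sq_sub_sq n 1
  have hsub : 2 ∣ n - 1 := (Nat.Odd.sub_odd hn odd_one).two_dvd
  rw [hfactor, pow_succ]
  rcases h with h | h
  · exact mul_comm (2 ^ k) 2 ▸ mul_dvd_mul hn.add_one.two_dvd h
  · exact mul_dvd_mul h hsub

theorem Odd.two_pow_add_dvd_pow_two_pow_sub_one {n c : ℕ} (hn : Odd n) (h : 2 ^ c ∣ n - 1)
    (s : ℕ) :
    2 ^ (c + s) ∣ n ^ 2 ^ s - 1 := by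
  induction s with
  | zero => simpa using h
  | succ s ih =>
    rw [pow_succ, pow_mul, ← add_assoc]
    exact hn.pow.two_pow_succ_dvd_sq_sub_one (Or.inl ih)

/-- Let `G ≤ AΓL(1,q)` be a `2`-transitive permutation group on `GF(q)`, `q = p^d` with
`p` an odd prime, and `P` a Sylow `2`-subgroup of `G`. If `2^m ∥ p-1`, then
`2^m ∣ |P ∩ AGL(1,q)|`; moreover if `p ≡ 3 (mod 4)`, `d` is even and `2^m̄ ∥ p+1`, then
`2^m̄ ∣ |P ∩ AGL(1,q)|`. Here elements of `AΓL(1,q)` are the maps `x ↦ a·σ(x) + b`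
(`a ≠ 0`, `σ` a field automorphism) and those of `AGL(1,q)` the maps `x ↦ a·x + b`. -/
theorem sylow_two_meets_agl (p d q m mb : ℕ) (hp : p.Prime) (hp2 : p ≠ 2)
    (hd : 0 < d) (hq : q = p ^ d)
    (F : Type*) [Field F] [Fintype F] (hF : Fintype.card F = q)
    (G : Subgroup (Equiv.Perm F))
    (hsemi : ∀ g ∈ G, ∃ (a b : F) (σ : F ≃+* F), a ≠ 0 ∧ ∀ x, g x = a * σ x + b)
    (h2t : ∀ x y x' y' : F, x ≠ y → x' ≠ y' → ∃ g ∈ G, g x = x' ∧ g y = y')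
    (P : Sylow 2 G)
    (hm : 2 ^ m ∣ p - 1 ∧ ¬ 2 ^ (m + 1) ∣ p - 1)
    (hmb : 2 ^ mb ∣ p + 1 ∧ ¬ 2 ^ (mb + 1) ∣ p + 1) :
    2 ^ m ∣ Nat.card {g : G // g ∈ P ∧
        ∃ a b : F, a ≠ 0 ∧ ∀ x, (g : Equiv.Perm F) x = a * x + b} ∧
      (p % 4 = 3 → Even d →
        2 ^ mb ∣ Nat.card {g : G // g ∈ P ∧
          ∃ a b : F, a ≠ 0 ∧ ∀ x, (g : Equiv.Perm F) x = a * x + b}) := by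
  have : Fact p.Prime := ⟨hp⟩
  have hpodd : Odd p := hp.odd_of_ne_two hp2
  let φ := G.autPart fun g hg => by
    obtain ⟨a, b, σ, ha, h⟩ := hsemi g hg
    exact ⟨σ, a, b, ha, h⟩
  rw [Nat.card_congr (Equiv.subtypeEquivRight (q := (· ∈ (P ⊓ φ.ker : Subgroup G)))
    fun g => by rw [Subgroup.mem_inf, Subgroup.mem_ker_autPart_iff]; rfl)]
  have hG : q - 1 ∣ Nat.card G := by
    rw [← hF, ← Nat.card_eq_fintype_card]
    exact (dvd_mul_left _ _).trans (G.card_mul_sub_one_dvd_card h2t)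
  have hindex : φ.ker.index ∣ d := by
    rw [Subgroup.index_ker, ← FiniteField.card_ringEquiv (hF.trans hq)]
    exact Subgroup.card_subgroup_dvd_card _
  obtain ⟨s, t, ht, rfl⟩ := Nat.exists_eq_pow_mul_and_not_dvd hd.ne' 2 (by norm_num)
  have htodd : Odd t := Nat.odd_iff.mpr (Nat.two_dvd_ne_zero.mp ht)
  have key : ∀ c, 2 ^ (c + s) ∣ q - 1 → 2 ^ c ∣ Nat.card ↥(P ⊓ φ.ker : Subgroup G) :=
    fun c hc => P.pow_dvd_card_inf_normal (hc.trans hG) hindex ht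
  rw [hq, mul_comm, pow_mul] at key
  refine ⟨key m ?_, fun _ hdeven => key mb ?_⟩
  · refine hpodd.pow.two_pow_add_dvd_pow_two_pow_sub_one (hm.1.trans ?_) s
    simpa using Nat.sub_dvd_pow_sub_pow p 1 t
  · obtain ⟨s, rfl⟩ : ∃ s', s = s' + 1 := Nat.exists_eq_succ_of_ne_zero fun hs => by
      simp [hs, Nat.not_even_iff_odd.mpr htodd] at hdeven
    have hsq : 2 ^ (mb + 1) ∣ (p ^ t) ^ 2 - 1 := hpodd.pow.two_pow_succ_dvd_sq_sub_one
      (Or.inr (hmb.1.trans (by simpa using Odd.nat_add_dvd_pow_add_pow p 1 htodd)))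
    rw [pow_succ', pow_mul, ← add_assoc, add_right_comm]
    exact hpodd.pow.pow.two_pow_add_dvd_pow_two_pow_sub_one hsq s
end
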